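/- arXiv:2605.15075 — 2 statements merged into one kernel-verified Lean document; each statement's English description precedes it below -/
import Mathlib

section
/- Let e₁ = 1, e₂ = i, e₃ = (1+i+j+k)/2, e₄ = (−1+(φ−1)i−φj)/2 in the real quaternions ℍ, and let I be the set of ℤ[φ]-linear combinations r₁e₁ + r₂e₂ + r₃e₃ + r₄e₄ with each rᵢ ∈ ℤ + ℤφ ⊂ ℝ (the icosian ring). Then: (i) I is closed under quaternion multiplication; (ii) I is closed under quaternion conjugation; (iii) each generator eᵣ has quaternionic norm normSq(eᵣ) = 1; (iv) for every x ∈ I the norm normSq(x) lies in ℤ + ℤφ ⊂ ℝ. -/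
noncomputable def φ : ℝ := (1 + Real.sqrt 5) / 2

/-- The golden integer ring `ℤ + ℤφ` as a subset of `ℝ`. -/
def Zφ : Set ℝ := {x | ∃ a b : ℤ, x = (a : ℝ) + (b : ℝ) * φ}

noncomputable def e₁ : Quaternion ℝ := 1
noncomputable def e₂ : Quaternion ℝ := ⟨0, 1, 0, 0⟩
noncomputable def e₃ : Quaternion ℝ := ⟨1/2, 1/2, 1/2, 1/2⟩
noncomputable def e₄ : Quaternion ℝ := ⟨-(1/2), (φ - 1)/2, -(φ/2), 0⟩

/-- The icosian ring: `ℤ[φ]`-linear combinations of `e₁, e₂, e₃, e₄`. -/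
noncomputable def Icosian : Set (Quaternion ℝ) :=
  {x | ∃ r₁ r₂ r₃ r₄ : ℝ, r₁ ∈ Zφ ∧ r₂ ∈ Zφ ∧ r₃ ∈ Zφ ∧ r₄ ∈ Zφ ∧
    x = r₁ • e₁ + r₂ • e₂ + r₃ • e₃ + r₄ • e₄}

/-!
Because φ² = φ + 1, the set ℤ + ℤφ is a subring of ℝ, and the icosians form the ℤ[φ]-submodule
of ℍ spanned by e₁, e₂, e₃, e₄. As multiplication is bilinear, closure under products reduces to
the multiplication table of the generators, whose entries all have coordinates in ℤ[φ].
Conjugation acts on coordinates by an integral substitution. Finally, normSq x = x x̄ is a real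
icosian, and the j- and k-components of r₁e₁ + r₂e₂ + r₃e₃ + r₄e₄ force r₃ = r₄ = 0 for a real
icosian, which is therefore r₁ ∈ ℤ[φ].
-/

open Quaternion

noncomputable section

theorem φ_sq : φ ^ 2 = φ + 1 := Real.goldenRatio_sq

def goldenIntegers : Subring ℝ where
  carrier := Zφ
  mul_mem' := by
    rintro _ _ ⟨a, b, rfl⟩ ⟨c, d, rfl⟩
    refine ⟨a * c + b * d, a * d + b * c + b * d, ?_⟩
    push_cast
    linear_combination (b * d : ℝ) * φ_sq
  one_mem' := ⟨1, 0, by simp⟩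
  add_mem' := by
    rintro _ _ ⟨a, b, rfl⟩ ⟨c, d, rfl⟩
    exact ⟨a + c, b + d, by push_cast; ring⟩
  zero_mem' := ⟨0, 0, by simp⟩
  neg_mem' := by
    rintro _ ⟨a, b, rfl⟩
    exact ⟨-a, -b, by push_cast; ring⟩

def goldenφ : goldenIntegers := ⟨φ, 0, 1, by simp⟩

@[simp] theorem coe_goldenφ : (goldenφ : ℝ) = φ := rfl

@[simp] theorem coe_ofNat_goldenIntegers (n : ℕ) [n.AtLeastTwo] :
    ((ofNat(n) : goldenIntegers) : ℝ) = ofNat(n) := rfl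

theorem e₁_eq_one : e₁ = 1 := rfl

def icosianComb (r₁ r₂ r₃ r₄ : goldenIntegers) : ℍ[ℝ] :=
  (r₁ : ℝ) • e₁ + (r₂ : ℝ) • e₂ + (r₃ : ℝ) • e₃ + (r₄ : ℝ) • e₄

section
variable (r₁ r₂ r₃ r₄ : goldenIntegers)

@[simp] theorem re_icosianComb : (icosianComb r₁ r₂ r₃ r₄).re = r₁ + r₃ / 2 - r₄ / 2 := by
  simp [icosianComb, e₁_eq_one]; simp [e₂, e₃, e₄]; ring

@[simp] theorem imI_icosianComb :
    (icosianComb r₁ r₂ r₃ r₄).imI = r₂ + r₃ / 2 + r₄ * (φ - 1) / 2 := by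
  simp [icosianComb, e₁_eq_one]; simp [e₂, e₃, e₄]; ring

@[simp] theorem imJ_icosianComb : (icosianComb r₁ r₂ r₃ r₄).imJ = r₃ / 2 - r₄ * φ / 2 := by
  simp [icosianComb, e₁_eq_one]; simp [e₂, e₃, e₄]; ring

@[simp] theorem imK_icosianComb : (icosianComb r₁ r₂ r₃ r₄).imK = r₃ / 2 := by
  simp [icosianComb, e₁_eq_one]; simp [e₂, e₃, e₄]; ring

end

theorem mem_icosian_iff {x : ℍ[ℝ]} :
    x ∈ Icosian ↔ ∃ r₁ r₂ r₃ r₄ : goldenIntegers, icosianComb r₁ r₂ r₃ r₄ = x := by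
  constructor
  · rintro ⟨r₁, r₂, r₃, r₄, h₁, h₂, h₃, h₄, rfl⟩
    exact ⟨⟨r₁, h₁⟩, ⟨r₂, h₂⟩, ⟨r₃, h₃⟩, ⟨r₄, h₄⟩, rfl⟩
  · rintro ⟨r₁, r₂, r₃, r₄, rfl⟩
    exact ⟨r₁, r₂, r₃, r₄, r₁.2, r₂.2, r₃.2, r₄.2, rfl⟩

theorem icosianComb_mem (r₁ r₂ r₃ r₄ : goldenIntegers) : icosianComb r₁ r₂ r₃ r₄ ∈ Icosian :=
  mem_icosian_iff.2 ⟨r₁, r₂, r₃, r₄, rfl⟩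

theorem generators_subset_icosian : ({e₁, e₂, e₃, e₄} : Set ℍ[ℝ]) ⊆ Icosian := by
  rintro _ (rfl | rfl | rfl | rfl)
  · simpa [icosianComb] using icosianComb_mem 1 0 0 0
  · simpa [icosianComb] using icosianComb_mem 0 1 0 0
  · simpa [icosianComb] using icosianComb_mem 0 0 1 0
  · simpa [icosianComb] using icosianComb_mem 0 0 0 1

def icosianSubmodule : Submodule goldenIntegers ℍ[ℝ] where
  carrier := Icosian
  add_mem' := by
    simp only [mem_icosian_iff]
    rintro _ _ ⟨r₁, r₂, r₃, r₄, rfl⟩ ⟨s₁, s₂, s₃, s₄, rfl⟩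
    exact ⟨r₁ + s₁, r₂ + s₂, r₃ + s₃, r₄ + s₄, by
      simp only [icosianComb, Subring.coe_add, add_smul]; abel⟩
  zero_mem' := mem_icosian_iff.2 ⟨0, 0, 0, 0, by simp [icosianComb]⟩
  smul_mem' := by
    simp only [mem_icosian_iff]
    rintro c _ ⟨r₁, r₂, r₃, r₄, rfl⟩
    exact ⟨c * r₁, c * r₂, c * r₃, c * r₄, by
      show _ = (c : ℝ) • icosianComb r₁ r₂ r₃ r₄
      simp only [icosianComb, Subring.coe_mul, smul_add, mul_smul]⟩

theorem icosianSubmodule_eq_span :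
    icosianSubmodule = Submodule.span goldenIntegers {e₁, e₂, e₃, e₄} := by
  apply le_antisymm
  · intro x hx
    obtain ⟨r₁, r₂, r₃, r₄, rfl⟩ := mem_icosian_iff.1 hx
    refine add_mem (add_mem (add_mem ?_ ?_) ?_) ?_ <;>
      exact Submodule.smul_mem _ _ (Submodule.subset_span (by simp))
  · exact Submodule.span_le.2 generators_subset_icosian

theorem e₂_mul_e₂ : e₂ * e₂ = icosianComb (-1) 0 0 0 := by
  ext <;> simp <;> simp [e₂]

theorem e₂_mul_e₃ : e₂ * e₃ = icosianComb (goldenφ - 2) (goldenφ - 2) 1 (2 * goldenφ - 2) := by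
  ext <;> simp <;> simp [e₂, e₃] <;> linarith [φ_sq]

theorem e₂_mul_e₄ : e₂ * e₄ = icosianComb 0 (goldenφ - 1) (-goldenφ) (-1) := by
  ext <;> simp <;> simp [e₂, e₄] <;> linarith [φ_sq]

theorem e₃_mul_e₂ : e₃ * e₂ = icosianComb (1 - goldenφ) (3 - goldenφ) (-1) (2 - 2 * goldenφ) := by
  ext <;> simp <;> simp [e₂, e₃] <;> linarith [φ_sq]

theorem e₃_mul_e₃ : e₃ * e₃ = icosianComb (-1) 0 1 0 := by
  ext <;> simp <;> simp [e₃] <;> linarith [φ_sq]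

theorem e₃_mul_e₄ :
    e₃ * e₄ = icosianComb (goldenφ - 1) (2 * goldenφ - 2) (-goldenφ) (goldenφ - 2) := by
  ext <;> simp <;> simp [e₃, e₄] <;> linarith [φ_sq]

theorem e₄_mul_e₂ : e₄ * e₂ = icosianComb (1 - goldenφ) (-goldenφ) goldenφ 1 := by
  ext <;> simp <;> simp [e₂, e₄] <;> linarith [φ_sq]

theorem e₄_mul_e₃ :
    e₄ * e₃ = icosianComb (2 - goldenφ) (2 - 2 * goldenφ) (goldenφ - 1) (3 - goldenφ) := by
  ext <;> simp <;> simp [e₃, e₄] <;> linarith [φ_sq]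

theorem e₄_mul_e₄ : e₄ * e₄ = icosianComb (-1) 0 0 (-1) := by
  ext <;> simp <;> simp [e₄] <;> linarith [φ_sq]

theorem mul_mem_icosian_of_mem_generators {a b : ℍ[ℝ]}
    (ha : a ∈ ({e₁, e₂, e₃, e₄} : Set ℍ[ℝ])) (hb : b ∈ ({e₁, e₂, e₃, e₄} : Set ℍ[ℝ])) :
    a * b ∈ Icosian := by
  rcases ha with rfl | rfl | rfl | rfl
  · rw [e₁_eq_one, one_mul]; exact generators_subset_icosian hb
  all_goals rcases hb with rfl | rfl | rfl | rfl
  all_goals first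
    | rw [e₁_eq_one, mul_one]; exact generators_subset_icosian (by simp)
    | simp only [e₂_mul_e₂, e₂_mul_e₃, e₂_mul_e₄, e₃_mul_e₂, e₃_mul_e₃, e₃_mul_e₄, e₄_mul_e₂,
        e₄_mul_e₃, e₄_mul_e₄, icosianComb_mem]

theorem icosianSubmodule_mul_le : icosianSubmodule * icosianSubmodule ≤ icosianSubmodule := by
  conv_lhs => rw [icosianSubmodule_eq_span]
  rw [Submodule.span_mul_span, Submodule.span_le]
  rintro _ ⟨a, ha, b, hb, rfl⟩
  exact mul_mem_icosian_of_mem_generators ha hb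

theorem mul_mem_icosian {x y : ℍ[ℝ]} (hx : x ∈ Icosian) (hy : y ∈ Icosian) : x * y ∈ Icosian :=
  icosianSubmodule_mul_le (Submodule.mul_mem_mul hx hy)

theorem star_icosianComb (r₁ r₂ r₃ r₄ : goldenIntegers) :
    star (icosianComb r₁ r₂ r₃ r₄) = icosianComb (r₁ + r₃ - r₄) (-r₂) (-r₃) (-r₄) := by
  ext <;> simp <;> ring

theorem star_mem_icosian {x : ℍ[ℝ]} (hx : x ∈ Icosian) : star x ∈ Icosian := by
  obtain ⟨r₁, r₂, r₃, r₄, rfl⟩ := mem_icosian_iff.1 hx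
  rw [star_icosianComb]
  exact icosianComb_mem _ _ _ _

theorem mem_Zφ_of_coe_mem_icosian {r : ℝ} (hr : (r : ℍ[ℝ]) ∈ Icosian) : r ∈ Zφ := by
  obtain ⟨r₁, r₂, r₃, r₄, h⟩ := mem_icosian_iff.1 hr
  obtain ⟨hre, -, himJ, himK⟩ := Quaternion.ext_iff.1 h
  simp only [re_icosianComb, imJ_icosianComb, imK_icosianComb, re_coe, imJ_coe, imK_coe]
    at hre himJ himK
  have hr₃ : (r₃ : ℝ) = 0 := by linarith
  have hr₄ : (r₄ : ℝ) = 0 := by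
    have : (r₄ : ℝ) * φ = 0 := by linarith
    exact (mul_eq_zero.1 this).resolve_right Real.goldenRatio_pos.ne'
  have : r = r₁ := by linarith
  exact this ▸ r₁.2

theorem normSq_mem_Zφ {x : ℍ[ℝ]} (hx : x ∈ Icosian) : normSq x ∈ Zφ :=
  mem_Zφ_of_coe_mem_icosian (self_mul_star x ▸ mul_mem_icosian hx (star_mem_icosian hx))

end

/-- The icosian ring is closed under quaternion multiplication and conjugation,
its generators have norm `1`, and all its elements have norm in `ℤ[φ]`. -/
theorem icosian_ring_properties :
    (∀ x ∈ Icosian, ∀ y ∈ Icosian, x * y ∈ Icosian) ∧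
    (∀ x ∈ Icosian, star x ∈ Icosian) ∧
    (Quaternion.normSq e₁ = 1 ∧ Quaternion.normSq e₂ = 1 ∧
      Quaternion.normSq e₃ = 1 ∧ Quaternion.normSq e₄ = 1) ∧
    (∀ x ∈ Icosian, Quaternion.normSq x ∈ Zφ) := by
  refine ⟨fun _ hx _ hy ↦ mul_mem_icosian hx hy, fun _ hx ↦ star_mem_icosian hx,
    ⟨?_, ?_, ?_, ?_⟩, fun _ hx ↦ normSq_mem_Zφ hx⟩
  all_goals rw [normSq_def']
  · simp [e₁_eq_one]
  · simp [e₂]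
  · norm_num [e₃]
  · simp [e₄]; linarith [φ_sq]
end

section
/- Let Φ ⊂ ℝ³ (standard Euclidean inner product) be the 30-element set consisting of all permutations of (±1, 0, 0) together with all even permutations of (±1/2, ±φ/2, ±φ⁻¹/2). Then: (i) Φ = −Φ; (ii) every α ∈ Φ satisfies ⟨α,α⟩ = 1; (iii) for all α, β ∈ Φ the reflection image β − 2⟨β,α⟩·α again lies in Φ; (iv) for all α, β ∈ Φ the Cartan coefficient 2⟨β,α⟩ lies in ℤ + ℤφ ⊂ ℝ. This is the H₃ root system, whose roots are the vertices of the icosidodecahedron. -/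
/-- Standard inner product on `ℝ³`. -/
def dot3 (x y : Fin 3 → ℝ) : ℝ := ∑ i, x i * y i

/-- The `H₃` root system: all permutations of `(±1, 0, 0)` together with all
even (cyclic) permutations of `(±1/2, ±φ/2, ±φ⁻¹/2)`. -/
noncomputable def H3 : Set (Fin 3 → ℝ) :=
  {v | ∃ (i : Fin 3) (ε : ℝ), (ε = 1 ∨ ε = -1) ∧ v = fun j => if j = i then ε else 0} ∪
  {v | ∃ (σ : Equiv.Perm (Fin 3)) (ε₁ ε₂ ε₃ : ℝ),
        Equiv.Perm.sign σ = 1 ∧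
        (ε₁ = 1 ∨ ε₁ = -1) ∧ (ε₂ = 1 ∨ ε₂ = -1) ∧ (ε₃ = 1 ∨ ε₃ = -1) ∧
        v = (![ε₁ / 2, ε₂ * φ / 2, ε₃ * φ⁻¹ / 2]) ∘ σ}

/-!
Every coordinate of `2α`, for `α` a root, lies in `ℤ[φ] = ℤ[X]/(X² - X - 1)`, which embeds into `ℝ`
because `φ` is irrational. Encoding each root `α` by `2α ∈ ℤ[φ]³` turns every claim into exact
integer arithmetic on 30 vectors (900 pairs for the reflections), which the kernel evaluates.
Central symmetry is the reflection of a root in itself.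
-/

open QuadraticAlgebra

lemma φ_eq_goldenRatio : φ = Real.goldenRatio := rfl

lemma inv_φ : φ⁻¹ = φ - 1 := by
  rw [φ_eq_goldenRatio, Real.inv_goldenRatio, ← Real.one_sub_goldenConj]
  ring

/-- The ring `ℤ[φ]`, with `ω` standing for `φ`. -/
abbrev GoldenInt := QuadraticAlgebra ℤ 1 1

namespace GoldenInt

noncomputable def toReal : GoldenInt →ₐ[ℤ] ℝ :=
  lift ⟨φ, by simp [← sq, φ_eq_goldenRatio, add_comm]⟩

lemma toReal_apply (z : GoldenInt) : toReal z = z.re + z.im * φ := by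
  simp [toReal, zsmul_eq_mul]

@[simp]
lemma toReal_omega : toReal ω = φ := by
  simp [toReal_apply]

lemma toReal_mem_Zφ (z : GoldenInt) : toReal z ∈ Zφ :=
  ⟨z.re, z.im, toReal_apply z⟩

lemma toReal_injective : Function.Injective toReal := by
  refine (injective_iff_map_eq_zero toReal).2 fun z hz => ?_
  rw [toReal_apply] at hz
  have him : z.im = 0 := by
    by_contra h
    exact ((Real.goldenRatio_irrational.intCast_mul h).intCast_add z.re).ne_zero hz
  ext
  · simpa [him] using hz
  · exact him

end GoldenInt

open GoldenInt

section Vectors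

variable {ι : Type*}

/-- A vector of `ℝ^ι` encoded by twice its coordinates, taken in `ℤ[φ]`. -/
noncomputable def toVec (v : ι → GoldenInt) : ι → ℝ := fun i => toReal (v i) / 2

lemma toVec_injective : Function.Injective (toVec : (ι → GoldenInt) → ι → ℝ) := by
  intro v w h
  funext i
  apply toReal_injective
  simpa [toVec] using congrFun h i

lemma toVec_comp {κ : Type*} (v : ι → GoldenInt) (σ : κ → ι) : toVec (v ∘ σ) = toVec v ∘ σ :=
  rfl

lemma toVec_sub_smul (c : GoldenInt) (s t : ι → GoldenInt) :
    toVec (t - c • s) = toVec t - toReal c • toVec s := by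
  funext i
  simp only [toVec, Pi.sub_apply, Pi.smul_apply, smul_eq_mul, map_sub, map_mul]
  ring

end Vectors

def gdot (s t : Fin 3 → GoldenInt) : GoldenInt := ∑ i, s i * t i

lemma toReal_gdot (s t : Fin 3 → GoldenInt) :
    toReal (gdot s t) = 4 * dot3 (toVec s) (toVec t) := by
  simp only [gdot, dot3, toVec, map_sum, map_mul, Finset.mul_sum]
  congr 1 with i
  ring

/-- The Cartan coefficient `2⟨β, α⟩` of `α = toVec s`, `β = toVec t`; the integer divisions are
exact on roots (`roots_cartan`). -/
def cartan (s t : Fin 3 → GoldenInt) : GoldenInt := ⟨(gdot t s).re / 2, (gdot t s).im / 2⟩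

def signs : List GoldenInt := [1, -1]

def evenPerms : List (Equiv.Perm (Fin 3)) := [1, finRotate 3, finRotate 3 * finRotate 3]

def axisRoot (i : Fin 3) (e : GoldenInt) : Fin 3 → GoldenInt :=
  fun j => if j = i then 2 * e else 0

def cyclicRoot (e₁ e₂ e₃ : GoldenInt) : Fin 3 → GoldenInt := ![e₁, e₂ * ω, e₃ * (ω - 1)]

def axisRoots : List (Fin 3 → GoldenInt) :=
  (List.finRange 3).flatMap fun i => signs.map (axisRoot i)

def cyclicRoots : List (Fin 3 → GoldenInt) :=
  evenPerms.flatMap fun σ : Equiv.Perm (Fin 3) =>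
    signs.flatMap fun e₁ => signs.flatMap fun e₂ => signs.map fun e₃ => cyclicRoot e₁ e₂ e₃ ∘ σ

def roots : List (Fin 3 → GoldenInt) := axisRoots ++ cyclicRoots

lemma mem_evenPerms (σ : Equiv.Perm (Fin 3)) : σ ∈ evenPerms ↔ Equiv.Perm.sign σ = 1 := by
  revert σ
  decide

lemma roots_nodup : roots.Nodup := by decide +kernel

lemma roots_length : roots.length = 30 := by decide +kernel

lemma gdot_self_of_mem_roots : ∀ s ∈ roots, gdot s s = 4 := by decide +kernel

lemma roots_cartan :
    ∀ s ∈ roots, ∀ t ∈ roots, 2 * cartan s t = gdot t s ∧ t - cartan s t • s ∈ roots := by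
  decide +kernel

lemma sign_iff_exists_mem_signs {ε : ℝ} : (ε = 1 ∨ ε = -1) ↔ ∃ e ∈ signs, toReal e = ε := by
  simp [signs, eq_comm]

lemma toVec_axisRoot (i : Fin 3) (e : GoldenInt) :
    toVec (axisRoot i e) = fun j => if j = i then toReal e else 0 := by
  funext j
  by_cases h : j = i <;> simp [toVec, axisRoot, h, map_ofNat]

lemma toVec_cyclicRoot (e₁ e₂ e₃ : GoldenInt) :
    toVec (cyclicRoot e₁ e₂ e₃) = ![toReal e₁ / 2, toReal e₂ * φ / 2, toReal e₃ * φ⁻¹ / 2] := by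
  funext j
  fin_cases j <;> simp [toVec, cyclicRoot, inv_φ]

lemma axis_part_eq_image_axisRoots :
    {v : Fin 3 → ℝ | ∃ (i : Fin 3) (ε : ℝ), (ε = 1 ∨ ε = -1) ∧ v = fun j => if j = i then ε else 0}
      = toVec '' {v | v ∈ axisRoots} := by
  ext x
  constructor
  · rintro ⟨i, ε, hε, rfl⟩
    obtain ⟨e, he, rfl⟩ := sign_iff_exists_mem_signs.1 hε
    refine ⟨axisRoot i e, ?_, toVec_axisRoot i e⟩
    simpa [axisRoots] using ⟨i, e, he, rfl⟩
  · rintro ⟨v, hv, rfl⟩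
    obtain ⟨i, e, he, rfl⟩ : ∃ i e, e ∈ signs ∧ axisRoot i e = v := by
      simpa [axisRoots] using hv
    exact ⟨i, toReal e, sign_iff_exists_mem_signs.2 ⟨e, he, rfl⟩, toVec_axisRoot i e⟩

lemma cyclic_part_eq_image_cyclicRoots :
    {v : Fin 3 → ℝ | ∃ (σ : Equiv.Perm (Fin 3)) (ε₁ ε₂ ε₃ : ℝ),
        Equiv.Perm.sign σ = 1 ∧
        (ε₁ = 1 ∨ ε₁ = -1) ∧ (ε₂ = 1 ∨ ε₂ = -1) ∧ (ε₃ = 1 ∨ ε₃ = -1) ∧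
        v = (![ε₁ / 2, ε₂ * φ / 2, ε₃ * φ⁻¹ / 2]) ∘ σ}
      = toVec '' {v | v ∈ cyclicRoots} := by
  ext x
  constructor
  · rintro ⟨σ, ε₁, ε₂, ε₃, hσ, h₁, h₂, h₃, rfl⟩
    obtain ⟨e₁, he₁, rfl⟩ := sign_iff_exists_mem_signs.1 h₁
    obtain ⟨e₂, he₂, rfl⟩ := sign_iff_exists_mem_signs.1 h₂
    obtain ⟨e₃, he₃, rfl⟩ := sign_iff_exists_mem_signs.1 h₃
    refine ⟨cyclicRoot e₁ e₂ e₃ ∘ σ, ?_, by rw [toVec_comp, toVec_cyclicRoot]⟩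
    simpa [cyclicRoots] using ⟨σ, (mem_evenPerms σ).2 hσ, e₁, he₁, e₂, he₂, e₃, he₃, rfl⟩
  · rintro ⟨v, hv, rfl⟩
    obtain ⟨σ, hσ, e₁, he₁, e₂, he₂, e₃, he₃, rfl⟩ :
        ∃ σ ∈ evenPerms, ∃ e₁ ∈ signs, ∃ e₂ ∈ signs, ∃ e₃ ∈ signs, cyclicRoot e₁ e₂ e₃ ∘ σ = v := by
      simpa [cyclicRoots] using hv
    exact ⟨σ, toReal e₁, toReal e₂, toReal e₃, (mem_evenPerms σ).1 hσ,
      sign_iff_exists_mem_signs.2 ⟨e₁, he₁, rfl⟩, sign_iff_exists_mem_signs.2 ⟨e₂, he₂, rfl⟩,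
      sign_iff_exists_mem_signs.2 ⟨e₃, he₃, rfl⟩, by rw [toVec_comp, toVec_cyclicRoot]⟩

lemma H3_eq_image_roots : H3 = toVec '' {v | v ∈ roots} := by
  rw [H3, axis_part_eq_image_axisRoots, cyclic_part_eq_image_cyclicRoots, ← Set.image_union]
  simp [roots, Set.ofPred_or]

lemma ncard_H3 : H3.ncard = 30 := by
  rw [H3_eq_image_roots, Set.ncard_image_of_injective _ toVec_injective,
    ← List.coe_toFinset, Set.ncard_coe_finset, List.toFinset_card_of_nodup roots_nodup,
    roots_length]

lemma dot3_self_of_mem_H3 (α : Fin 3 → ℝ) (hα : α ∈ H3) : dot3 α α = 1 := by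
  rw [H3_eq_image_roots] at hα
  obtain ⟨s, hs, rfl⟩ := hα
  have h := toReal_gdot s s
  rw [gdot_self_of_mem_roots s hs, map_ofNat] at h
  linarith

lemma exists_cartan_of_mem_H3 (α : Fin 3 → ℝ) (hα : α ∈ H3) (β : Fin 3 → ℝ) (hβ : β ∈ H3) :
    ∃ c : GoldenInt, 2 * dot3 β α = toReal c ∧ β - toReal c • α ∈ H3 := by
  rw [H3_eq_image_roots] at hα hβ ⊢
  obtain ⟨s, hs, rfl⟩ := hα
  obtain ⟨t, ht, rfl⟩ := hβ
  obtain ⟨hc, hmem⟩ := roots_cartan s hs t ht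
  refine ⟨cartan s t, ?_, t - cartan s t • s, hmem, toVec_sub_smul _ _ _⟩
  have h := congrArg toReal hc
  rw [map_mul, map_ofNat, toReal_gdot] at h
  linarith

lemma reflection_mem_H3 (α : Fin 3 → ℝ) (hα : α ∈ H3) (β : Fin 3 → ℝ) (hβ : β ∈ H3) :
    β - (2 * dot3 β α) • α ∈ H3 := by
  obtain ⟨c, hc, hmem⟩ := exists_cartan_of_mem_H3 α hα β hβ
  rwa [hc]

lemma two_mul_dot3_mem_Zφ (α : Fin 3 → ℝ) (hα : α ∈ H3) (β : Fin 3 → ℝ) (hβ : β ∈ H3) :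
    2 * dot3 β α ∈ Zφ := by
  obtain ⟨c, hc, -⟩ := exists_cartan_of_mem_H3 α hα β hβ
  exact hc ▸ toReal_mem_Zφ c

lemma neg_mem_H3 (α : Fin 3 → ℝ) (hα : α ∈ H3) : -α ∈ H3 := by
  have h := reflection_mem_H3 α hα α hα
  rwa [dot3_self_of_mem_H3 α hα, mul_one, two_smul, sub_add_cancel_left] at h

/-- `H₃` has 30 elements, is centrally symmetric, consists of unit vectors,
is closed under its reflections, and has Cartan coefficients in `ℤ + ℤφ`. -/
theorem H3_root_system :
    H3.ncard = 30 ∧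
    (∀ α, α ∈ H3 ↔ -α ∈ H3) ∧
    (∀ α ∈ H3, dot3 α α = 1) ∧
    (∀ α ∈ H3, ∀ β ∈ H3, β - (2 * dot3 β α) • α ∈ H3) ∧
    (∀ α ∈ H3, ∀ β ∈ H3, 2 * dot3 β α ∈ Zφ) :=
  ⟨ncard_H3, fun α => ⟨neg_mem_H3 α, fun h => neg_neg α ▸ neg_mem_H3 (-α) h⟩,
    dot3_self_of_mem_H3, reflection_mem_H3, two_mul_dot3_mem_Zφ⟩
end
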